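/- Let H be a real inner product space, λ > 0, and let L_1, …, L_{mα} : H → ℝ be convex differentiable loss terms. Let f minimize g ↦ (1/(mn)) Σ_{j=1}^{mα} L_j(g) + (λ/2)‖g‖² and let f^{∖i′} minimize the same objective with the i′-th term L_{i′} omitted. Suppose L_{i′} decomposes as L_{i′}(g) = Σ_{k=1}^{n′} c_k(E_k(g)) with n′ = n/α, where each c_k : ℝ → ℝ is τ-Lipschitz and each evaluation functional E_k : H → ℝ satisfies |E_k(g) − E_k(g′)| ≤ ρ‖g − g′‖ · ‖x′_{i′}‖ for all g, g′ ∈ H. Then ‖f − f^{∖i′}‖ ≤ ρτ‖x′_{i′}‖/(mλα). -/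

import Mathlib

/-!
The regularized objective is `λ`-strongly convex, so its minimizer `x` satisfies
`φ x + (λ/2)‖x - y‖² ≤ φ y` for every `y`. Writing this for both objectives (at `f` and `f'`)
and adding, every term cancels except the removed loss:
`λ‖f - f'‖² ≤ (1/(mn)) (L_{i'} f' - L_{i'} f)`. The decomposition of `L_{i'}` into `n/α`
composites `c_k ∘ E_k` makes it `(n/α) τ ρ ‖x'_{i'}‖`-Lipschitz, and dividing by `λ‖f - f'‖`
gives the bound.
-/

open Set Finset Filter Topology

theorem ConvexOn.finsetSum {𝕜 E β ι : Type*} [Semiring 𝕜] [PartialOrder 𝕜]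
    [AddCommMonoid E] [AddCommMonoid β] [PartialOrder β] [IsOrderedAddMonoid β]
    [SMul 𝕜 E] [Module 𝕜 β] [PosSMulMono 𝕜 β] {t : Set E} (ht : Convex 𝕜 t)
    {s : Finset ι} {f : ι → E → β} (hf : ∀ i ∈ s, ConvexOn 𝕜 t (f i)) :
    ConvexOn 𝕜 t fun x ↦ ∑ i ∈ s, f i x := by
  simp_rw [← Finset.sum_apply]
  exact Finset.sum_induction _ (ConvexOn 𝕜 t) (fun _ _ ↦ ConvexOn.add)
    (convexOn_const 0 ht) hf

theorem ConvexOn.strongConvexOn_add_sq_norm {E : Type*} [NormedAddCommGroup E]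
    [InnerProductSpace ℝ E] {s : Set E} {G : E → ℝ} (hG : ConvexOn ℝ s G) (m : ℝ) :
    StrongConvexOn s m fun x ↦ G x + m / 2 * ‖x‖ ^ 2 :=
  strongConvexOn_iff_convex.2 (by simpa using hG)

theorem StrongConvexOn.add_sq_norm_sub_le_of_isMinOn {E : Type*} [NormedAddCommGroup E]
    [NormedSpace ℝ E] {s : Set E} {m : ℝ} {φ : E → ℝ} (hφ : StrongConvexOn s m φ)
    {x y : E} (hx : x ∈ s) (hy : y ∈ s) (hmin : IsMinOn φ s x) :
    φ x + m / 2 * ‖x - y‖ ^ 2 ≤ φ y := by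
  have hsegment : ∀ t ∈ Ioo (0 : ℝ) 1, φ x + (1 - t) * (m / 2 * ‖x - y‖ ^ 2) ≤ φ y := by
    intro t ⟨ht₀, ht₁⟩
    have hconv := hφ.2 hx hy (sub_nonneg.2 ht₁.le) ht₀.le (sub_add_cancel 1 t)
    have hle :=
      isMinOn_iff.1 hmin _ (hφ.1 hx hy (sub_nonneg.2 ht₁.le) ht₀.le (sub_add_cancel 1 t))
    simp only [smul_eq_mul] at hconv
    refine le_of_mul_le_mul_left ?_ ht₀
    linarith
  have hlim : Tendsto (fun t : ℝ ↦ φ x + (1 - t) * (m / 2 * ‖x - y‖ ^ 2)) (𝓝[>] 0)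
      (𝓝 (φ x + (1 - 0) * (m / 2 * ‖x - y‖ ^ 2))) :=
    (Continuous.tendsto (by fun_prop) 0).mono_left nhdsWithin_le_nhds
  simpa using le_of_tendsto hlim (mem_of_superset (Ioo_mem_nhdsGT one_pos) hsegment)

theorem mul_norm_sub_sq_le_sub_of_isMinOn {E : Type*} [NormedAddCommGroup E]
    [InnerProductSpace ℝ E] {ℓ G : E → ℝ} (hℓ : ConvexOn ℝ univ ℓ) (hG : ConvexOn ℝ univ G)
    {lam : ℝ} {f f' : E} (hf : IsMinOn (fun x ↦ ℓ x + G x + lam / 2 * ‖x‖ ^ 2) univ f)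
    (hf' : IsMinOn (fun x ↦ G x + lam / 2 * ‖x‖ ^ 2) univ f') :
    lam * ‖f - f'‖ ^ 2 ≤ ℓ f' - ℓ f := by
  have h := ((hℓ.add hG).strongConvexOn_add_sq_norm lam).add_sq_norm_sub_le_of_isMinOn
    (mem_univ f) (mem_univ f') hf
  have h' := (hG.strongConvexOn_add_sq_norm lam).add_sq_norm_sub_le_of_isMinOn
    (mem_univ f') (mem_univ f) hf'
  rw [norm_sub_rev] at h'
  simp only [Pi.add_apply] at h
  linarith

theorem abs_sum_comp_sub_sum_comp_le {ι X : Type*} [Fintype ι] (c : ι → ℝ → ℝ) (E : ι → X → ℝ)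
    {τ K : ℝ} (hτ : 0 ≤ τ) (hc : ∀ k a b, |c k a - c k b| ≤ τ * |a - b|) {x y : X}
    (hE : ∀ k, |E k x - E k y| ≤ K) :
    |∑ k, c k (E k x) - ∑ k, c k (E k y)| ≤ Fintype.card ι * (τ * K) := by
  rw [← Finset.sum_sub_distrib]
  calc |∑ k, (c k (E k x) - c k (E k y))| ≤ ∑ k, |c k (E k x) - c k (E k y)| :=
        Finset.abs_sum_le_sum_abs _ _
    _ ≤ ∑ _k : ι, τ * K := Finset.sum_le_sum fun k _ ↦
        (hc k _ _).trans (mul_le_mul_of_nonneg_left (hE k) hτ)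
    _ = Fintype.card ι * (τ * K) := by simp

theorem le_div_of_mul_sq_le_mul {a d b : ℝ} (ha : 0 < a) (hd : 0 ≤ d) (hb : 0 ≤ b)
    (h : a * d ^ 2 ≤ b * d) : d ≤ b / a := by
  rcases hd.eq_or_lt with rfl | hd
  · positivity
  rw [le_div_iff₀ ha]
  exact le_of_mul_le_mul_right (by linarith) hd

theorem natCast_div_div_mul_le (m n α : ℕ) :
    ((n / α : ℕ) : ℝ) / (m * n) ≤ 1 / (m * α) := by
  rcases eq_or_ne n 0 with rfl | hn
  · simp only [Nat.zero_div, CharP.cast_eq_zero, zero_div]; positivity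
  have hn' : (n : ℝ) ≠ 0 := Nat.cast_ne_zero.2 hn
  calc ((n / α : ℕ) : ℝ) / (m * n) ≤ (n / α) / (m * n) := by gcongr; exact Nat.cast_div_le
    _ = 1 / (m * α) := by field_simp

theorem parameter_stability_remove_one_minisample_general
    {H : Type*} [NormedAddCommGroup H] [InnerProductSpace ℝ H]
    (m n α : ℕ)
    (L : Fin (m * α) → H → ℝ)
    (hconv : ∀ j, ConvexOn ℝ univ (L j))
    (lam : ℝ) (hlam : 0 < lam)
    (i' : Fin (m * α)) (f f' : H)
    (hf : ∀ g : H,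
      (1 / ((m : ℝ) * n)) * ∑ j, L j f + lam / 2 * ‖f‖ ^ 2
        ≤ (1 / ((m : ℝ) * n)) * ∑ j, L j g + lam / 2 * ‖g‖ ^ 2)
    (hf' : ∀ g : H,
      (1 / ((m : ℝ) * n)) * ∑ j ∈ univ.erase i', L j f' + lam / 2 * ‖f'‖ ^ 2
        ≤ (1 / ((m : ℝ) * n)) * ∑ j ∈ univ.erase i', L j g + lam / 2 * ‖g‖ ^ 2)
    (τ ρ xnorm : ℝ) (hτ : 0 ≤ τ) (hρ : 0 ≤ ρ) (hx : 0 ≤ xnorm)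
    (c : Fin (n / α) → ℝ → ℝ) (E : Fin (n / α) → H → ℝ)
    (hdecomp : ∀ g : H, L i' g = ∑ k, c k (E k g))
    (hlip : ∀ (k : Fin (n / α)) (a b : ℝ), |c k a - c k b| ≤ τ * |a - b|)
    (hadm : ∀ (k : Fin (n / α)) (g g' : H),
      |E k g - E k g'| ≤ ρ * ‖g - g'‖ * xnorm) :
    ‖f - f'‖ ≤ ρ * τ * xnorm / ((m : ℝ) * lam * α) := by
  set w : ℝ := 1 / ((m : ℝ) * n)
  have hw : 0 ≤ w := by positivity
  have hstab : lam * ‖f - f'‖ ^ 2 ≤ w * L i' f' - w * L i' f :=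
    mul_norm_sub_sq_le_sub_of_isMinOn ((hconv i').smul hw)
      ((ConvexOn.finsetSum convex_univ fun j _ ↦ hconv j).smul hw)
      (isMinOn_univ_iff.2 fun g ↦ by
        simpa only [← add_sum_erase _ _ (mem_univ i'), mul_add, smul_eq_mul] using hf g)
      (isMinOn_univ_iff.2 fun g ↦ by simpa only [smul_eq_mul] using hf' g)
  have hlipL : L i' f' - L i' f ≤ (n / α : ℕ) * (τ * (ρ * ‖f - f'‖ * xnorm)) := by
    rw [hdecomp, hdecomp]
    simpa using (le_abs_self _).trans <| abs_sum_comp_sub_sum_comp_le c E hτ hlip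
      fun k ↦ (by simpa only [norm_sub_rev f'] using hadm k f' f)
  calc ‖f - f'‖ ≤ w * (n / α : ℕ) * (ρ * τ * xnorm) / lam := by
        refine le_div_of_mul_sq_le_mul hlam (norm_nonneg _) (by positivity) ?_
        calc lam * ‖f - f'‖ ^ 2 ≤ w * (L i' f' - L i' f) := by linarith
          _ ≤ w * ((n / α : ℕ) * (τ * (ρ * ‖f - f'‖ * xnorm))) := by gcongr
          _ = _ := by ring
    _ ≤ 1 / (m * α) * (ρ * τ * xnorm) / lam := by
        gcongr
        simpa only [w, one_div_mul_eq_div] using natCast_div_div_mul_le m n α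
    _ = ρ * τ * xnorm / ((m : ℝ) * lam * α) := by ring

/-- **Parameter stability under removal of one mini-sample (Theorem: stability vs.
structural complexity regularization, key bound).**
`f` minimizes `g ↦ (1/(mn)) Σ_{j=1}^{mα} L_j g + (λ/2)‖g‖²` and `f'` minimizes the
same objective with the `i'`-th loss term omitted.  If the removed loss decomposes
as `L_{i'} g = Σ_{k=1}^{n/α} c_k (E_k g)` with each `c_k` τ-Lipschitz and each
`E_k` ρ-admissible at the mini-sample input of norm `xnorm`, then
`‖f − f'‖ ≤ ρτ·xnorm/(mλα)`. -/
theorem parameter_stability_remove_one_minisample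
    {H : Type*} [NormedAddCommGroup H] [InnerProductSpace ℝ H]
    (m n α : ℕ) (hm : 0 < m) (hn : 0 < n) (hα : 0 < α) (hdvd : α ∣ n)
    (L : Fin (m * α) → H → ℝ)
    (hconv : ∀ j, ConvexOn ℝ univ (L j))
    (hdiff : ∀ j, Differentiable ℝ (L j))
    (lam : ℝ) (hlam : 0 < lam)
    (i' : Fin (m * α)) (f f' : H)
    (hf : ∀ g : H,
      (1 / ((m : ℝ) * n)) * ∑ j, L j f + lam / 2 * ‖f‖ ^ 2
        ≤ (1 / ((m : ℝ) * n)) * ∑ j, L j g + lam / 2 * ‖g‖ ^ 2)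
    (hf' : ∀ g : H,
      (1 / ((m : ℝ) * n)) * ∑ j ∈ univ.erase i', L j f' + lam / 2 * ‖f'‖ ^ 2
        ≤ (1 / ((m : ℝ) * n)) * ∑ j ∈ univ.erase i', L j g + lam / 2 * ‖g‖ ^ 2)
    (τ ρ xnorm : ℝ) (hτ : 0 ≤ τ) (hρ : 0 ≤ ρ) (hx : 0 ≤ xnorm)
    (c : Fin (n / α) → ℝ → ℝ) (E : Fin (n / α) → H → ℝ)
    (hdecomp : ∀ g : H, L i' g = ∑ k, c k (E k g))
    (hlip : ∀ (k : Fin (n / α)) (a b : ℝ), |c k a - c k b| ≤ τ * |a - b|)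
    (hadm : ∀ (k : Fin (n / α)) (g g' : H),
      |E k g - E k g'| ≤ ρ * ‖g - g'‖ * xnorm) :
    ‖f - f'‖ ≤ ρ * τ * xnorm / ((m : ℝ) * lam * α) :=
  parameter_stability_remove_one_minisample_general m n α L hconv lam hlam i' f f' hf hf' τ ρ xnorm
    hτ hρ hx c E hdecomp hlip hadm
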